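/- Let H be a real inner product space, E₁ : H → ℝ convex and differentiable with gradient ∇E₁, E₂ : H → ℝ concave and differentiable with gradient ∇E₂, τ > 0, K ≥ 1, and let u⁰, u¹, …, u^K ∈ H satisfy, for every k = 0, 1, …, K−1 with d_t u^{k+1} := (u^{k+1} − u^k)/τ, the relation ⟨d_t u^{k+1}, u^{k+1} − u^k⟩ + ⟨∇E₁(u^{k+1}), u^{k+1} − u^k⟩ + ⟨∇E₂(u^k), u^{k+1} − u^k⟩ = 0. Then with E = E₁ + E₂ the iterates satisfy the unconditional energy stability estimate E(u^K) + τ Σ_{k=0}^{K−1} ‖d_t u^{k+1}‖² ≤ E(u⁰); in particular the energy E(u^k) is non-increasing in k and the corrections d_t u^k tend to zero in the sense that Σ_k τ ‖d_t u^k‖² is bounded by the initial energy excess. -/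

import Mathlib

/-!
A convex function lies above its tangent planes and a concave one below them. Taking the
tangent plane of `E₁` at the new iterate and of `E₂` at the old one, the relation defining a
step bounds the energy decrease from below by `τ ‖d_t u^{k+1}‖²`; summing over the steps
telescopes.
-/

open Finset

section TangentPlane

variable {F : Type*} [NormedAddCommGroup F] [NormedSpace ℝ F] {f : F → ℝ} {f' : F →L[ℝ] ℝ}
  {x : F}

theorem ConvexOn.le_sub_of_hasFDerivAt (hf : ConvexOn ℝ Set.univ f) (hx : HasFDerivAt f f' x)
    (y : F) : f' (y - x) ≤ f y - f x := by
  have hline : ConvexOn ℝ Set.univ (f ∘ AffineMap.lineMap (k := ℝ) x y) := by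
    simpa using hf.comp_affineMap (AffineMap.lineMap (k := ℝ) x y)
  have hderiv : HasDerivAt (f ∘ AffineMap.lineMap (k := ℝ) x y) (f' (y - x)) 0 := by
    rw [← AffineMap.lineMap_apply_zero x y (k := ℝ)] at hx
    exact hx.comp_hasDerivAt 0 AffineMap.hasDerivAt_lineMap
  simpa [slope_def_field] using
    hline.le_slope_of_hasDerivAt (Set.mem_univ 0) (Set.mem_univ 1) zero_lt_one hderiv

theorem ConcaveOn.sub_le_of_hasFDerivAt (hf : ConcaveOn ℝ Set.univ f) (hx : HasFDerivAt f f' x)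
    (y : F) : f y - f x ≤ f' (y - x) := by
  have := hf.neg.le_sub_of_hasFDerivAt hx.neg y
  simp only [neg_apply, Pi.neg_apply] at this
  linarith

end TangentPlane

section Gradient

variable {H : Type*} [NormedAddCommGroup H] [InnerProductSpace ℝ H]

theorem real_inner_one_div_smul_self (τ : ℝ) (v : H) :
    inner ℝ ((1 / τ) • v) v = τ * ‖(1 / τ) • v‖ ^ 2 := by
  rw [real_inner_smul_left, real_inner_self_eq_norm_sq, norm_smul, mul_pow, Real.norm_eq_abs,
    sq_abs]
  rcases eq_or_ne τ 0 with rfl | hτ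
  · simp
  · field_simp

variable [CompleteSpace H]

theorem ConvexOn.inner_le_sub_of_hasGradientAt {f : H → ℝ} {g x : H}
    (hf : ConvexOn ℝ Set.univ f) (hg : HasGradientAt f g x) (y : H) :
    inner ℝ g (y - x) ≤ f y - f x := by
  simpa using hf.le_sub_of_hasFDerivAt hg.hasFDerivAt y

theorem ConcaveOn.sub_le_inner_of_hasGradientAt {f : H → ℝ} {g x : H}
    (hf : ConcaveOn ℝ Set.univ f) (hg : HasGradientAt f g x) (y : H) :
    f y - f x ≤ inner ℝ g (y - x) := by
  simpa using hf.sub_le_of_hasFDerivAt hg.hasFDerivAt y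

/-- In the scheme, `r = ⟪d_t u^{k+1}, u^{k+1} - u^k⟫` is the dissipated energy. -/
theorem add_add_le_of_convex_concave_step {E₁ E₂ : H → ℝ} {g₁ g₂ a b : H} {r : ℝ}
    (hE₁ : ConvexOn ℝ Set.univ E₁) (hg₁ : HasGradientAt E₁ g₁ b)
    (hE₂ : ConcaveOn ℝ Set.univ E₂) (hg₂ : HasGradientAt E₂ g₂ a)
    (hstep : r + inner ℝ g₁ (b - a) + inner ℝ g₂ (b - a) = 0) :
    E₁ b + E₂ b + r ≤ E₁ a + E₂ a := by
  have h₁ := hE₁.inner_le_sub_of_hasGradientAt hg₁ a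
  have h₂ := hE₂.sub_le_inner_of_hasGradientAt hg₂ b
  rw [← neg_sub, inner_neg_right] at h₁
  linarith

end Gradient

theorem add_sum_le_of_forall_add_le {e d : ℕ → ℝ} {K : ℕ}
    (h : ∀ k < K, e (k + 1) + d k ≤ e k) : e K + ∑ k ∈ range K, d k ≤ e 0 :=
  calc e K + ∑ k ∈ range K, d k ≤ e K + ∑ k ∈ range K, (e k - e (k + 1)) := by
        gcongr with k hk
        linarith [h k (mem_range.1 hk)]
    _ = e 0 := by rw [sum_range_sub']; ring

theorem imex_energy_stability_general
    {H : Type*} [NormedAddCommGroup H] [InnerProductSpace ℝ H] [CompleteSpace H]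
    (E₁ E₂ : H → ℝ) (g₁ g₂ : H → H)
    (hE₁ : ConvexOn ℝ Set.univ E₁) (hg₁ : ∀ x, HasGradientAt E₁ (g₁ x) x)
    (hE₂ : ConcaveOn ℝ Set.univ E₂) (hg₂ : ∀ x, HasGradientAt E₂ (g₂ x) x)
    (τ : ℝ) (hτ : 0 < τ) (K : ℕ) (u : ℕ → H)
    (hrel : ∀ k < K,
      (inner ℝ ((1 / τ) • (u (k + 1) - u k)) (u (k + 1) - u k) : ℝ)
        + (inner ℝ (g₁ (u (k + 1))) (u (k + 1) - u k) : ℝ)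
        + (inner ℝ (g₂ (u k)) (u (k + 1) - u k) : ℝ) = 0) :
    (E₁ (u K) + E₂ (u K)) +
        τ * ∑ k ∈ Finset.range K, ‖(1 / τ) • (u (k + 1) - u k)‖ ^ 2 ≤ E₁ (u 0) + E₂ (u 0) ∧
    ∀ k < K, E₁ (u (k + 1)) + E₂ (u (k + 1)) ≤ E₁ (u k) + E₂ (u k) := by
  have hstep : ∀ k < K, E₁ (u (k + 1)) + E₂ (u (k + 1)) +
      τ * ‖(1 / τ) • (u (k + 1) - u k)‖ ^ 2 ≤ E₁ (u k) + E₂ (u k) := fun k hk => by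
    rw [← real_inner_one_div_smul_self]
    exact add_add_le_of_convex_concave_step hE₁ (hg₁ _) hE₂ (hg₂ _) (hrel k hk)
  refine ⟨?_, fun k hk => ?_⟩
  · rw [mul_sum]
    exact add_sum_le_of_forall_add_le (e := fun k => E₁ (u k) + E₂ (u k)) hstep
  · have : 0 ≤ τ * ‖(1 / τ) • (u (k + 1) - u k)‖ ^ 2 := by positivity
    linarith [hstep k hk]

/-- Abstract unconditional energy stability of the implicit–explicit discrete gradient flow:
if `E₁` is convex and `E₂` is concave, both differentiable with gradients `g₁`, `g₂`, and the
iterates satisfy `⟨d_t u^{k+1}, u^{k+1}−u^k⟩ + ⟨∇E₁(u^{k+1}), u^{k+1}−u^k⟩ +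
⟨∇E₂(u^k), u^{k+1}−u^k⟩ = 0` for all `k < K`, then with `E = E₁ + E₂` one has
`E(u^K) + τ Σ_{k<K} ‖d_t u^{k+1}‖² ≤ E(u⁰)`, and the energy is non-increasing. -/
theorem imex_energy_stability
    {H : Type*} [NormedAddCommGroup H] [InnerProductSpace ℝ H] [CompleteSpace H]
    (E₁ E₂ : H → ℝ) (g₁ g₂ : H → H)
    (hE₁ : ConvexOn ℝ Set.univ E₁) (hg₁ : ∀ x, HasGradientAt E₁ (g₁ x) x)
    (hE₂ : ConcaveOn ℝ Set.univ E₂) (hg₂ : ∀ x, HasGradientAt E₂ (g₂ x) x)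
    (τ : ℝ) (hτ : 0 < τ) (K : ℕ) (hK : 1 ≤ K) (u : ℕ → H)
    (hrel : ∀ k < K,
      (inner ℝ ((1 / τ) • (u (k + 1) - u k)) (u (k + 1) - u k) : ℝ)
        + (inner ℝ (g₁ (u (k + 1))) (u (k + 1) - u k) : ℝ)
        + (inner ℝ (g₂ (u k)) (u (k + 1) - u k) : ℝ) = 0) :
    (E₁ (u K) + E₂ (u K)) +
        τ * ∑ k ∈ Finset.range K, ‖(1 / τ) • (u (k + 1) - u k)‖ ^ 2 ≤ E₁ (u 0) + E₂ (u 0) ∧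
    ∀ k < K, E₁ (u (k + 1)) + E₂ (u (k + 1)) ≤ E₁ (u k) + E₂ (u k) :=
  imex_energy_stability_general E₁ E₂ g₁ g₂ hE₁ hg₁ hE₂ hg₂ τ hτ K u hrel
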